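/- Fix t > 0 and define w(p) = |p·(t,t,0)|_G for p ∈ ℍ. Then |w(p) − w(q)| ≤ d_R(p,q) for all p, q ∈ ℍ, but there is no constant L > 0 such that |w(p) − w(q)| ≤ L·d_L(p,q) for all p, q ∈ ℍ. (Witness: for p₁ = (−t−ε, −t+ε, −εt) and p₂ = (−t,−t,0), one has w(p₁) − w(p₂) = (4ε⁴ + 64ε²t²)^{1/4} while d_L(p₁,p₂) = √2·ε.) -/

import Mathlib

/-!
Encode `p = (x, y, z)` by `ζ = x + iy` and `Z = |ζ|² + 4iz`, so that `|p|_G² = |Z|` and the group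
law reads `Z(p·q) = Z(p) + Z(q) + 2 ζ̄(p) ζ(q)`. Since `|ζ| ≤ |p|_G`, this gives the triangle
inequality `|p·q|_G ≤ |p|_G + |q|_G`, hence `| |p|_G − |q|_G | ≤ d_R(p, q)`; as `d_R` is invariant
under right translation by `(t, t, 0)`, `w` is 1-Lipschitz for `d_R`.

`d_L` is not right-invariant. For `p₁ = (−t−ε, −t+ε, −εt)`, `p₂ = (−t, −t, 0)` we have
`w(p₂) = 0`, `w(p₁)² ≥ 8εt` from the vertical coordinate of `p₁·(t, t, 0) = (−ε, ε, −2εt)`,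
while `d_L(p₁, p₂)² = 2ε²`; taking `ε = t / L²` breaks any Lipschitz bound with constant `L`.
-/

noncomputable section

/-- The Heisenberg group as a set: `ℝ³` with coordinates `(x, y, z)`. -/
abbrev Heis : Type := ℝ × ℝ × ℝ

/-- The Heisenberg group multiplication. -/
def Hmul (p q : Heis) : Heis :=
  (p.1 + q.1, p.2.1 + q.2.1, p.2.2 + q.2.2 + (p.1 * q.2.1 - q.1 * p.2.1) / 2)

/-- The Heisenberg group inverse. -/
def Hinv (p : Heis) : Heis := (-p.1, -p.2.1, -p.2.2)

/-- The Korányi gauge `|p|_G = ((x² + y²)² + 16 z²)^(1/4)`. -/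
def kGauge (p : Heis) : ℝ := ((p.1 ^ 2 + p.2.1 ^ 2) ^ 2 + 16 * p.2.2 ^ 2) ^ ((1 : ℝ) / 4)

/-- The left-invariant gauge metric `d_L(p,q) = |p⁻¹·q|_G`. -/
def dL (p q : Heis) : ℝ := kGauge (Hmul (Hinv p) q)

/-- The right-invariant gauge metric `d_R(p,q) = |p·q⁻¹|_G`. -/
def dR (p q : Heis) : ℝ := kGauge (Hmul p (Hinv q))

def horiz (p : Heis) : ℂ := ⟨p.1, p.2.1⟩

def gaugeCplx (p : Heis) : ℂ := ⟨p.1 ^ 2 + p.2.1 ^ 2, 4 * p.2.2⟩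

lemma kGauge_nonneg (p : Heis) : 0 ≤ kGauge p := by
  unfold kGauge; positivity

lemma kGauge_sq (p : Heis) : kGauge p ^ 2 = ‖gaugeCplx p‖ := by
  have hbase : Complex.normSq (gaugeCplx p) = (p.1 ^ 2 + p.2.1 ^ 2) ^ 2 + 16 * p.2.2 ^ 2 := by
    simp only [gaugeCplx, Complex.normSq_mk]; ring
  rw [Complex.norm_def, hbase, Real.sqrt_eq_rpow, kGauge, ← Real.rpow_natCast,
    ← Real.rpow_mul (by positivity)]
  norm_num

lemma four_mul_abs_le_kGauge_sq (p : Heis) : 4 * |p.2.2| ≤ kGauge p ^ 2 := by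
  have h := Complex.abs_im_le_norm (gaugeCplx p)
  rwa [← kGauge_sq, gaugeCplx, abs_mul, abs_of_pos four_pos] at h

lemma kGauge_sq_of_snd_snd_eq_zero (x y : ℝ) : kGauge (x, y, 0) ^ 2 = x ^ 2 + y ^ 2 := by
  rw [kGauge_sq, gaugeCplx, mul_zero, ← Complex.ofReal_def, Complex.norm_of_nonneg (by positivity)]

lemma norm_horiz_le_kGauge (p : Heis) : ‖horiz p‖ ≤ kGauge p := by
  have h : ‖horiz p‖ ^ 2 ≤ kGauge p ^ 2 := by
    rw [kGauge_sq, Complex.sq_norm, horiz, Complex.normSq_mk]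
    convert Complex.re_le_norm (gaugeCplx p) using 1
    simp only [gaugeCplx]; ring
  exact (pow_le_pow_iff_left₀ (norm_nonneg _) (kGauge_nonneg p) two_ne_zero).mp h

lemma gaugeCplx_Hmul (p q : Heis) :
    gaugeCplx (Hmul p q) = gaugeCplx p + gaugeCplx q + 2 * (star (horiz p) * horiz q) := by
  apply Complex.ext <;> simp [gaugeCplx, horiz, Hmul] <;> ring

lemma kGauge_Hmul_le (p q : Heis) : kGauge (Hmul p q) ≤ kGauge p + kGauge q := by
  have hcross : ‖2 * (star (horiz p) * horiz q)‖ ≤ 2 * (kGauge p * kGauge q) := by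
    rw [norm_mul, norm_mul, norm_star, Complex.norm_two]
    exact mul_le_mul_of_nonneg_left (mul_le_mul (norm_horiz_le_kGauge p) (norm_horiz_le_kGauge q)
      (norm_nonneg _) (kGauge_nonneg p)) zero_le_two
  have h : kGauge (Hmul p q) ^ 2 ≤ (kGauge p + kGauge q) ^ 2 :=
    calc kGauge (Hmul p q) ^ 2
        = ‖gaugeCplx p + gaugeCplx q + 2 * (star (horiz p) * horiz q)‖ := by
          rw [kGauge_sq, gaugeCplx_Hmul]
      _ ≤ ‖gaugeCplx p‖ + ‖gaugeCplx q‖ + ‖2 * (star (horiz p) * horiz q)‖ :=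
          norm_add₃_le
      _ ≤ kGauge p ^ 2 + kGauge q ^ 2 + 2 * (kGauge p * kGauge q) := by
          rw [kGauge_sq, kGauge_sq]; gcongr
      _ = (kGauge p + kGauge q) ^ 2 := by ring
  exact (pow_le_pow_iff_left₀ (kGauge_nonneg _)
    (add_nonneg (kGauge_nonneg p) (kGauge_nonneg q)) two_ne_zero).mp h

lemma Hmul_Hinv_Hmul_cancel (p q : Heis) : Hmul (Hmul p (Hinv q)) q = p := by
  simp only [Hmul, Hinv]
  exact Prod.ext (by ring) (Prod.ext (by ring) (by ring))

lemma dR_comm (p q : Heis) : dR p q = dR q p := by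
  simp only [dR, kGauge, Hmul, Hinv]
  congr 1
  ring

lemma abs_kGauge_sub_le_dR (p q : Heis) : |kGauge p - kGauge q| ≤ dR p q := by
  have hp : kGauge p ≤ dR p q + kGauge q := by
    have h := kGauge_Hmul_le (Hmul p (Hinv q)) q
    rw [Hmul_Hinv_Hmul_cancel] at h
    exact h
  have hq : kGauge q ≤ dR p q + kGauge p := by
    have h := kGauge_Hmul_le (Hmul q (Hinv p)) p
    rw [Hmul_Hinv_Hmul_cancel] at h
    rw [dR_comm]
    exact h
  rw [abs_sub_le_iff]
  exact ⟨sub_le_iff_le_add.mpr hp, sub_le_iff_le_add.mpr hq⟩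

lemma dR_Hmul_right (p q a : Heis) : dR (Hmul p a) (Hmul q a) = dR p q := by
  simp only [dR, Hmul, Hinv]
  congr 1
  exact Prod.ext (by ring) (Prod.ext (by ring) (by ring))

def witnessPoint (t ε : ℝ) : Heis := (-t - ε, -t + ε, -(ε * t))

lemma eight_mul_abs_le_kGauge_Hmul_witnessPoint_sq (t ε : ℝ) :
    8 * |ε * t| ≤ kGauge (Hmul (witnessPoint t ε) (t, t, 0)) ^ 2 := by
  have hprod : Hmul (witnessPoint t ε) (t, t, 0) = (-ε, ε, -(2 * (ε * t))) := by
    simp only [witnessPoint, Hmul]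
    exact Prod.ext (by ring) (Prod.ext (by ring) (by ring))
  rw [hprod]
  have h := four_mul_abs_le_kGauge_sq (-ε, ε, -(2 * (ε * t)))
  dsimp only at h
  rw [abs_neg, abs_mul 2, abs_two] at h
  linarith

lemma dL_witnessPoint_sq (t ε : ℝ) : dL (witnessPoint t ε) (-t, -t, 0) ^ 2 = 2 * ε ^ 2 := by
  have hprod : Hmul (Hinv (witnessPoint t ε)) (-t, -t, 0) = (ε, -ε, 0) := by
    simp only [witnessPoint, Hmul, Hinv]
    exact Prod.ext (by ring) (Prod.ext (by ring) (by ring))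
  rw [dL, hprod, kGauge_sq_of_snd_snd_eq_zero]
  ring

end

/-- For fixed `t > 0`, the function `w(p) = |p·(t,t,0)|_G` is 1-Lipschitz with respect to
`d_R` but not Lipschitz with respect to `d_L`. -/
theorem translated_gauge_lipschitz_dR_not_dL :
    ∀ t : ℝ, 0 < t →
      (∀ p q : Heis,
        |kGauge (Hmul p (t, t, 0)) - kGauge (Hmul q (t, t, 0))| ≤ dR p q) ∧
      ¬ ∃ L : ℝ, 0 < L ∧ ∀ p q : Heis,
          |kGauge (Hmul p (t, t, 0)) - kGauge (Hmul q (t, t, 0))| ≤ L * dL p q := by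
  intro t ht
  refine ⟨fun p q => ?_, ?_⟩
  · rw [← dR_Hmul_right p q (t, t, 0)]
    exact abs_kGauge_sub_le_dR _ _
  rintro ⟨L, hL, hlip⟩
  set ε := t / L ^ 2 with hε
  have hεt : 0 < ε * t := by positivity
  have hw₂ : kGauge (Hmul (-t, -t, 0) (t, t, 0)) = 0 := by simp [kGauge, Hmul]
  have hbound : kGauge (Hmul (witnessPoint t ε) (t, t, 0)) ≤
      L * dL (witnessPoint t ε) (-t, -t, 0) := by
    simpa [hw₂, abs_of_nonneg (kGauge_nonneg _)] using hlip (witnessPoint t ε) (-t, -t, 0)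
  have hsq := pow_le_pow_left₀ (kGauge_nonneg _) hbound 2
  rw [mul_pow, dL_witnessPoint_sq] at hsq
  have hlow := eight_mul_abs_le_kGauge_Hmul_witnessPoint_sq t ε
  rw [abs_of_pos hεt] at hlow
  have hLε : L ^ 2 * (2 * ε ^ 2) = 2 * (ε * t) := by
    rw [hε]; field_simp
  linarith
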